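/- For any nonzero φ = (φ₁, φ₂, φ₃, φ₄) ∈ ℝ⁴, the kernel of the 4×4 real matrix M(φ) with rows (φ₁, φ₂, φ₃, φ₄), (φ₃, φ₄, φ₁, φ₂), (φ₄, −φ₃, −φ₂, φ₁), (φ₁, φ₂, −φ₃, −φ₄) is one-dimensional and is spanned by the vector (−φ₂, φ₁, −φ₄, φ₃). (This matrix is half the Jacobian of the map from the real components of the two order parameters to the orbit-space coordinates, and its kernel is the Goldstone direction.) -/
import Mathlib


open Matrix

/-- Half the Jacobian matrix of the orbit map, written in terms of the four real
components of the two order parameters. -/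
def Mjac (φ : Fin 4 → ℝ) : Matrix (Fin 4) (Fin 4) ℝ :=
  !![φ 0, φ 1, φ 2, φ 3;
     φ 2, φ 3, φ 0, φ 1;
     φ 3, -(φ 2), -(φ 1), φ 0;
     φ 0, φ 1, -(φ 2), -(φ 3)]

/-- For nonzero φ, the kernel of M(φ) is one-dimensional, spanned by the
Goldstone direction (−φ₂, φ₁, −φ₄, φ₃). -/
theorem jacobian_kernel_is_goldstone
    (φ : Fin 4 → ℝ) (hφ : φ ≠ 0) :
    (![-(φ 1), φ 0, -(φ 3), φ 2] : Fin 4 → ℝ) ≠ 0 ∧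
    ∀ v : Fin 4 → ℝ, (Mjac φ).mulVec v = 0 ↔
      ∃ c : ℝ, v = c • ![-(φ 1), φ 0, -(φ 3), φ 2] := by
  have hS : φ 0 ^ 2 + φ 1 ^ 2 + φ 2 ^ 2 + φ 3 ^ 2 ≠ 0 := by
    intro h
    apply hφ
    have h0 : φ 0 = 0 ∧ φ 1 = 0 ∧ φ 2 = 0 ∧ φ 3 = 0 := by
      refine ⟨?_, ?_, ?_, ?_⟩ <;> nlinarith [sq_nonneg (φ 0), sq_nonneg (φ 1),
        sq_nonneg (φ 2), sq_nonneg (φ 3)]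
    funext i
    fin_cases i <;> simp [h0.1, h0.2.1, h0.2.2.1, h0.2.2.2]
  constructor
  · intro h
    apply hS
    have h0 := congrFun h 0
    have h1 := congrFun h 1
    have h2 := congrFun h 2
    have h3 := congrFun h 3
    simp at h0 h1 h2 h3
    nlinarith
  · intro v
    constructor
    · intro h
      have e0 := congrFun h 0
      have e1 := congrFun h 1
      have e2 := congrFun h 2
      have e3 := congrFun h 3
      simp [Mjac, Matrix.mulVec, dotProduct, Fin.sum_univ_four] at e0 e1 e2 e3
      refine ⟨(-(φ 1) * v 0 + φ 0 * v 1 - φ 3 * v 2 + φ 2 * v 3) /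
        (φ 0 ^ 2 + φ 1 ^ 2 + φ 2 ^ 2 + φ 3 ^ 2), ?_⟩
      funext i
      have g0 : v 0 = (-(φ 1) * v 0 + φ 0 * v 1 - φ 3 * v 2 + φ 2 * v 3) /
          (φ 0 ^ 2 + φ 1 ^ 2 + φ 2 ^ 2 + φ 3 ^ 2) * (-(φ 1)) := by
        rw [div_mul_eq_mul_div, eq_div_iff hS]
        linear_combination φ 2 * e1 + φ 3 * e2 + φ 0 * e3
      have g1 : v 1 = (-(φ 1) * v 0 + φ 0 * v 1 - φ 3 * v 2 + φ 2 * v 3) /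
          (φ 0 ^ 2 + φ 1 ^ 2 + φ 2 ^ 2 + φ 3 ^ 2) * (φ 0) := by
        rw [div_mul_eq_mul_div, eq_div_iff hS]
        linear_combination φ 3 * e1 - φ 2 * e2 + φ 1 * e3
      have g2 : v 2 = (-(φ 1) * v 0 + φ 0 * v 1 - φ 3 * v 2 + φ 2 * v 3) /
          (φ 0 ^ 2 + φ 1 ^ 2 + φ 2 ^ 2 + φ 3 ^ 2) * (-(φ 3)) := by
        rw [div_mul_eq_mul_div, eq_div_iff hS]
        linear_combination φ 0 * e1 - φ 1 * e2 - φ 2 * e3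
      have g3 : v 3 = (-(φ 1) * v 0 + φ 0 * v 1 - φ 3 * v 2 + φ 2 * v 3) /
          (φ 0 ^ 2 + φ 1 ^ 2 + φ 2 ^ 2 + φ 3 ^ 2) * (φ 2) := by
        rw [div_mul_eq_mul_div, eq_div_iff hS]
        linear_combination φ 1 * e1 + φ 0 * e2 - φ 3 * e3
      fin_cases i <;> simp
      all_goals first
        | linear_combination g0
        | linear_combination g1
        | linear_combination g2
        | linear_combination g3
    · rintro ⟨c, rfl⟩
      funext i
      fin_cases i <;>
        simp [Mjac, Matrix.mulVec, dotProduct, Fin.sum_univ_four] <;> ring
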